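/- arXiv:1011.1199 — 3 statements merged into one kernel-verified Lean document; each statement's English description precedes it below -/
import Mathlib

section
/- Consider a birth-death Markov chain on {0,1,…,Q} with stationary distribution π satisfying π_j ≤ π_{j+1} for all 0 ≤ j ≤ Q-1. Then for every function f: {0,…,Q} → ℝ, Var_π(f) ≤ 2Q² ∑_{z=0}^{Q-1} π_z (f(z+1) - f(z))². -/
/-!
Comparing with the constant `f Q` bounds the variance by `∑ j, π j (f j - f Q)²`. Each
`f Q - f j` telescopes over the edges `z ∈ [j, Q)`, so Cauchy–Schwarz costs a factor `Q`;
after exchanging the sums, edge `z` carries the mass `π 0 + ⋯ + π z ≤ (z + 1) π z ≤ Q π z`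
by monotonicity, which gives another factor `Q`.
-/

open Finset

def weightedVariance {ι : Type*} (s : Finset ι) (w f : ι → ℝ) : ℝ :=
  ∑ i ∈ s, w i * f i ^ 2 - (∑ i ∈ s, w i * f i) ^ 2

lemma weightedVariance_le_sum_mul_sub_sq {ι : Type*} {s : Finset ι} {w : ι → ℝ}
    (hw : ∑ i ∈ s, w i = 1) (f : ι → ℝ) (c : ℝ) :
    weightedVariance s w f ≤ ∑ i ∈ s, w i * (f i - c) ^ 2 := by
  have hexpand : ∑ i ∈ s, w i * (f i - c) ^ 2
      = ∑ i ∈ s, w i * f i ^ 2 - 2 * c * ∑ i ∈ s, w i * f i + c ^ 2 * ∑ i ∈ s, w i := by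
    simp only [mul_sum, ← sum_sub_distrib, ← sum_add_distrib]
    exact sum_congr rfl fun i _ ↦ by ring
  rw [weightedVariance, hexpand, hw]
  nlinarith [sq_nonneg (∑ i ∈ s, w i * f i - c)]

lemma sq_sub_le_mul_sum_sq_sub (f : ℕ → ℝ) {m n : ℕ} (hmn : m ≤ n) :
    (f n - f m) ^ 2 ≤ (n - m : ℕ) * ∑ z ∈ Ico m n, (f (z + 1) - f z) ^ 2 := by
  rw [← sum_Ico_sub f hmn, ← Nat.card_Ico]
  exact sq_sum_le_card_mul_sum_sq

lemma sum_range_succ_le_mul_of_monotoneOn {π : ℕ → ℝ} {z : ℕ} (hπ : MonotoneOn π (Set.Iic z)) :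
    ∑ j ∈ range (z + 1), π j ≤ (z + 1) * π z := by
  have := sum_le_card_nsmul (range (z + 1)) π (π z) fun j hj ↦
    hπ (Set.mem_Iic.2 (Nat.lt_succ_iff.1 (mem_range.1 hj))) (Set.mem_Iic.2 le_rfl)
      (Nat.lt_succ_iff.1 (mem_range.1 hj))
  simpa [nsmul_eq_mul] using this

theorem sum_mul_sq_sub_le_sq_mul_sum_mul_sq_sub {Q : ℕ} {π : ℕ → ℝ} (hπ : ∀ j, 0 ≤ π j)
    (hmono : MonotoneOn π (Set.Iic Q)) (f : ℕ → ℝ) :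
    ∑ j ∈ range Q, π j * (f Q - f j) ^ 2
      ≤ (Q : ℝ) ^ 2 * ∑ z ∈ range Q, π z * (f (z + 1) - f z) ^ 2 := by
  set d : ℕ → ℝ := fun z ↦ (f (z + 1) - f z) ^ 2
  calc ∑ j ∈ range Q, π j * (f Q - f j) ^ 2
      ≤ ∑ j ∈ range Q, π j * (Q * ∑ z ∈ Ico j Q, d z) := by
        refine sum_le_sum fun j hj ↦ mul_le_mul_of_nonneg_left ?_ (hπ j)
        refine (sq_sub_le_mul_sum_sq_sub f (mem_range.1 hj).le).trans ?_
        gcongr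
        exact_mod_cast Nat.sub_le Q j
    _ = Q * ∑ z ∈ range Q, (∑ j ∈ range (z + 1), π j) * d z := by
        simp only [mul_sum, sum_mul, range_eq_Ico]
        rw [sum_Ico_Ico_comm]
        exact sum_congr rfl fun _ _ ↦ sum_congr rfl fun _ _ ↦ by ring
    _ ≤ Q * ∑ z ∈ range Q, (Q * π z) * d z := by
        gcongr with z hz
        refine (sum_range_succ_le_mul_of_monotoneOn (hmono.mono ?_)).trans ?_
        · exact Set.Iic_subset_Iic.2 (mem_range.1 hz).le
        · gcongr
          · exact hπ z
          · exact_mod_cast mem_range.1 hz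
    _ = (Q : ℝ) ^ 2 * ∑ z ∈ range Q, π z * d z := by
        simp only [mul_sum]
        exact sum_congr rfl fun _ _ ↦ by ring

/-- Poincaré inequality for a monotone stationary distribution
of a birth-death chain on `{0,…,Q}`:
`Var_π(f) ≤ 2Q² ∑_{z=0}^{Q-1} π_z (f(z+1)-f(z))²`. -/
theorem stmt1 (Q : ℕ) (π f : ℕ → ℝ)
    (hpos : ∀ j, 0 ≤ π j)
    (hprob : ∑ j ∈ Finset.range (Q + 1), π j = 1)
    (hmono : ∀ j, j < Q → π j ≤ π (j + 1)) :
    (∑ j ∈ Finset.range (Q + 1), π j * (f j) ^ 2)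
      - (∑ j ∈ Finset.range (Q + 1), π j * f j) ^ 2
    ≤ 2 * (Q : ℝ) ^ 2 * ∑ z ∈ Finset.range Q, π z * (f (z + 1) - f z) ^ 2 := by
  have hmonoOn : MonotoneOn π (Set.Iic Q) :=
    monotoneOn_of_le_succ Set.ordConnected_Iic fun j _ _ hj ↦ hmono j (Order.succ_le_iff.1 hj)
  have hdirichlet : 0 ≤ ∑ z ∈ range Q, π z * (f (z + 1) - f z) ^ 2 :=
    sum_nonneg fun z _ ↦ mul_nonneg (hpos z) (sq_nonneg _)
  calc weightedVariance (range (Q + 1)) π f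
      ≤ ∑ j ∈ range (Q + 1), π j * (f j - f Q) ^ 2 :=
        weightedVariance_le_sum_mul_sub_sq hprob f (f Q)
    _ = ∑ j ∈ range Q, π j * (f Q - f j) ^ 2 := by
        rw [sum_range_succ, sub_self, zero_pow two_ne_zero, mul_zero, add_zero]
        exact sum_congr rfl fun j _ ↦ by rw [sub_sq_comm]
    _ ≤ (Q : ℝ) ^ 2 * ∑ z ∈ range Q, π z * (f (z + 1) - f z) ^ 2 :=
        sum_mul_sq_sub_le_sq_mul_sum_mul_sq_sub hpos hmonoOn f
    _ ≤ 2 * (Q : ℝ) ^ 2 * ∑ z ∈ range Q, π z * (f (z + 1) - f z) ^ 2 := by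
        nlinarith [sq_nonneg (Q : ℝ)]
end

section
/- (Spectral gap comparison between environment and untagged process, Lemma spec_gap0.) Suppose on configurations with η(0) ≥ 1 and total j particles one has a₁^{-1} ≤ η(0)/g(η(0)) ≤ j·a₀^{-1}. Let W(l,j) and W^{env}(l,j) be the inverse spectral gaps of the zero-range generator 𝓛_{Λ_l} on Σ_{Λ_l,j} and of the environment generator L^{env}_{Λ_l} on Σ*_{Λ_l,j}, respectively (both with symmetric nearest-neighbor p). Then for j ≥ 1: W^{env}(l,j) ≤ (a₁ a₀^{-1} j)² · W(l, j−1). -/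
open Finset

/-- `g(k)! = g(1)⋯g(k)`. -/
noncomputable def gfact (g : ℕ → ℝ) (k : ℕ) : ℝ := ∏ i ∈ Finset.Icc 1 k, g i

/-- Canonical zero-range weight of a configuration. -/
noncomputable def cw (g : ℕ → ℝ) {n : ℕ} (η : Fin n → ℕ) : ℝ :=
  ∏ x, (gfact g (η x))⁻¹

/-- Expectation under the canonical zero-range measure. -/
noncomputable def canE (g : ℕ → ℝ) (n k : ℕ) (f : (Fin n → ℕ) → ℝ) : ℝ :=
  (∑ η ∈ Finset.Nat.antidiagonalTuple n k, cw g η * f η) /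
  (∑ η ∈ Finset.Nat.antidiagonalTuple n k, cw g η)

/-- Expectation under the Palm canonical measure (size-biased at `o`). -/
noncomputable def palmE (g : ℕ → ℝ) (n k : ℕ) (o : Fin n)
    (f : (Fin n → ℕ) → ℝ) : ℝ :=
  (∑ η ∈ Finset.Nat.antidiagonalTuple n k, (η o : ℝ) * cw g η * f η) /
  (∑ η ∈ Finset.Nat.antidiagonalTuple n k, (η o : ℝ) * cw g η)

/-- The configuration obtained by moving a particle from `x` to `y`. -/
def mv {n : ℕ} (η : Fin n → ℕ) (x y : Fin n) : Fin n → ℕ :=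
  fun z => if z = y then η y + 1 else if z = x then η x - 1 else η z

/-- Left endpoint of the `i`-th nearest-neighbor bond of the cube `Λ_l`. -/
def sA (l : ℕ) (i : Fin (2 * l)) : Fin (2 * l + 1) :=
  ⟨i.1, by have := i.2; omega⟩

/-- Right endpoint of the `i`-th nearest-neighbor bond of the cube `Λ_l`. -/
def sB (l : ℕ) (i : Fin (2 * l)) : Fin (2 * l + 1) :=
  ⟨i.1 + 1, by have := i.2; omega⟩

/-- Variance under the canonical measure `μ_{Λ_l,j}`. -/
noncomputable def varMu (g : ℕ → ℝ) (l j : ℕ)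
    (f : (Fin (2 * l + 1) → ℕ) → ℝ) : ℝ :=
  canE g (2 * l + 1) j (fun η => (f η) ^ 2) - (canE g (2 * l + 1) j f) ^ 2

/-- Local Dirichlet contribution of a configuration for the untagged
(symmetric nearest-neighbor, `p(±1) = 1/2`) zero-range dynamics. -/
noncomputable def dloc (g : ℕ → ℝ) (l : ℕ) (η : Fin (2 * l + 1) → ℕ)
    (f : (Fin (2 * l + 1) → ℕ) → ℝ) : ℝ :=
  (1 / 2) * ∑ i : Fin (2 * l),
    ((1 / 2) * g (η (sA l i)) * (f (mv η (sA l i) (sB l i)) - f η) ^ 2 +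
     (1 / 2) * g (η (sB l i)) * (f (mv η (sB l i) (sA l i)) - f η) ^ 2)

/-- Dirichlet form `D(μ_{Λ_l,j}, f)` of the untagged zero-range process. -/
noncomputable def dirMu (g : ℕ → ℝ) (l j : ℕ)
    (f : (Fin (2 * l + 1) → ℕ) → ℝ) : ℝ :=
  (∑ η ∈ Finset.Nat.antidiagonalTuple (2 * l + 1) j, cw g η * dloc g l η f) /
  (∑ η ∈ Finset.Nat.antidiagonalTuple (2 * l + 1) j, cw g η)

/-- Jump rate of the environment process: at the origin a particle leaves at
rate `g(η(0))(η(0)-1)/η(0)`, elsewhere at rate `g(η(x))`. -/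
noncomputable def rEnv (g : ℕ → ℝ) {n : ℕ} (o : Fin n) (η : Fin n → ℕ)
    (x : Fin n) : ℝ :=
  if x = o then g (η x) * (((η x : ℝ) - 1) / (η x)) else g (η x)

/-- Variance under the Palm canonical measure `ν_{Λ_l,j}`. -/
noncomputable def varNu (g : ℕ → ℝ) (l j : ℕ) (o : Fin (2 * l + 1))
    (f : (Fin (2 * l + 1) → ℕ) → ℝ) : ℝ :=
  palmE g (2 * l + 1) j o (fun η => (f η) ^ 2) - (palmE g (2 * l + 1) j o f) ^ 2

/-- Local Dirichlet contribution for the environment dynamics. -/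
noncomputable def dlocEnv (g : ℕ → ℝ) (l : ℕ) (o : Fin (2 * l + 1))
    (η : Fin (2 * l + 1) → ℕ) (f : (Fin (2 * l + 1) → ℕ) → ℝ) : ℝ :=
  (1 / 2) * ∑ i : Fin (2 * l),
    ((1 / 2) * rEnv g o η (sA l i) * (f (mv η (sA l i) (sB l i)) - f η) ^ 2 +
     (1 / 2) * rEnv g o η (sB l i) * (f (mv η (sB l i) (sA l i)) - f η) ^ 2)

/-- Dirichlet form `D(ν_{Λ_l,j}, f)` of the environment process. -/
noncomputable def dirNu (g : ℕ → ℝ) (l j : ℕ) (o : Fin (2 * l + 1))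
    (f : (Fin (2 * l + 1) → ℕ) → ℝ) : ℝ :=
  (∑ η ∈ Finset.Nat.antidiagonalTuple (2 * l + 1) j,
      (η o : ℝ) * cw g η * dlocEnv g l o η f) /
  (∑ η ∈ Finset.Nat.antidiagonalTuple (2 * l + 1) j, (η o : ℝ) * cw g η)

/-!
The shift `η ↦ η - d₀` identifies the Palm measure `ν_{Λ_l,j}` with the canonical measure
`μ_{Λ_l,j-1}` reweighted by the density `(η(0)+1)/g(η(0)+1)`, which the hypothesis pins between
`a₁⁻¹` and `j a₀⁻¹`. Variances under comparable weights are comparable, with the ratio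
`a₁ a₀⁻¹ j` of the bounds as factor. Up to the same density the environment jump rates dominate
the zero-range rates, so the Dirichlet forms are comparable with the same factor. Combined with
the Poincaré inequality for `μ_{Λ_l,j-1}`, the factor enters twice.
-/

open Finset.Nat

section WeightedAverage

variable {α : Type*} (s : Finset α)

noncomputable def wAvg (w F : α → ℝ) : ℝ :=
  (∑ a ∈ s, w a * F a) / ∑ a ∈ s, w a

noncomputable def wVar (w F : α → ℝ) : ℝ :=
  wAvg s w (fun a => F a ^ 2) - wAvg s w F ^ 2

variable {s}

lemma wVar_eq_wAvg_sub_sq_sub {w : α → ℝ} (hw : ∑ a ∈ s, w a ≠ 0) (F : α → ℝ) (c : ℝ) :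
    wVar s w F = wAvg s w (fun a => (F a - c) ^ 2) - (wAvg s w F - c) ^ 2 := by
  have hdev : ∑ a ∈ s, w a * (F a - c) ^ 2
      = ∑ a ∈ s, w a * F a ^ 2 - 2 * c * ∑ a ∈ s, w a * F a + c ^ 2 * ∑ a ∈ s, w a := by
    simp only [Finset.mul_sum, ← Finset.sum_sub_distrib, ← Finset.sum_add_distrib]
    exact Finset.sum_congr rfl fun a _ => by ring
  simp only [wVar, wAvg, hdev]
  field_simp
  ring

lemma wAvg_le_mul_wAvg {w v D E : α → ℝ} {c K : ℝ} (hc : 0 ≤ c)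
    (hDE : ∀ a ∈ s, w a * D a ≤ c * (v a * E a)) (hE : 0 ≤ ∑ a ∈ s, v a * E a)
    (hvw : ∑ a ∈ s, v a ≤ K * ∑ a ∈ s, w a) (hw : 0 < ∑ a ∈ s, w a)
    (hv : 0 < ∑ a ∈ s, v a) :
    wAvg s w D ≤ c * K * wAvg s v E := by
  have hsum : ∑ a ∈ s, w a * D a ≤ c * ∑ a ∈ s, v a * E a := by
    rw [Finset.mul_sum]; exact Finset.sum_le_sum hDE
  rw [wAvg, wAvg, div_le_iff₀ hw]
  calc ∑ a ∈ s, w a * D a ≤ c * ∑ a ∈ s, v a * E a := hsum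
    _ = c * ((∑ a ∈ s, v a * E a) / ∑ a ∈ s, v a) * ∑ a ∈ s, v a := by
      field_simp
    _ ≤ c * ((∑ a ∈ s, v a * E a) / ∑ a ∈ s, v a) * (K * ∑ a ∈ s, w a) := by
      gcongr
    _ = _ := by ring

/-- The variance is the minimum over `c` of the mean square deviation from `c`. -/
lemma wVar_le_of_le_of_le {w v : α → ℝ} {β K : ℝ} (hβ : 0 < β)
    (hw : ∀ a ∈ s, 0 ≤ w a) (hwv : ∀ a ∈ s, β * w a ≤ v a) (hvw : ∀ a ∈ s, v a ≤ K * w a)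
    (hsum : 0 < ∑ a ∈ s, w a) (F : α → ℝ) :
    wVar s v F ≤ K / β * wVar s w F := by
  have hβsum : β * ∑ a ∈ s, w a ≤ ∑ a ∈ s, v a := by
    rw [Finset.mul_sum]; exact Finset.sum_le_sum hwv
  have hvsum : 0 < ∑ a ∈ s, v a := lt_of_lt_of_le (mul_pos hβ hsum) hβsum
  have hK : 0 ≤ K := by
    have : ∑ a ∈ s, v a ≤ K * ∑ a ∈ s, w a := by
      rw [Finset.mul_sum]; exact Finset.sum_le_sum hvw
    nlinarith
  set c := wAvg s w F
  have hdev : wAvg s v (fun a => (F a - c) ^ 2) ≤ K * β⁻¹ * wAvg s w (fun a => (F a - c) ^ 2) :=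
    wAvg_le_mul_wAvg hK
      (fun a ha => by rw [← mul_assoc]; gcongr; exact hvw a ha)
      (Finset.sum_nonneg fun a ha => mul_nonneg (hw a ha) (sq_nonneg _))
      ((le_inv_mul_iff₀ hβ).mpr hβsum) hvsum hsum
  rw [wVar_eq_wAvg_sub_sq_sub hvsum.ne' F c, wVar_eq_wAvg_sub_sq_sub hsum.ne' F c, sub_self,
    zero_pow two_ne_zero, sub_zero, div_eq_mul_inv]
  nlinarith [sq_nonneg (wAvg s v F - c)]

end WeightedAverage

section ZeroRange

variable {n : ℕ} {g : ℕ → ℝ} {a₀ a₁ : ℝ}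

lemma sum_add_single_one (o : Fin n) (η : Fin n → ℕ) :
    ∑ x, (η + Pi.single o 1 : Fin n → ℕ) x = ∑ x, η x + 1 := by
  simp [Finset.sum_add_distrib]

lemma antidiagonalTuple_nonempty (o : Fin n) (k : ℕ) : (antidiagonalTuple n k).Nonempty :=
  ⟨Pi.single o k, by simp [mem_antidiagonalTuple]⟩

lemma apply_le_of_mem_antidiagonalTuple {k : ℕ} {η : Fin n → ℕ}
    (hη : η ∈ antidiagonalTuple n k) (x : Fin n) : η x ≤ k :=
  mem_antidiagonalTuple.mp hη ▸ Finset.single_le_sum (fun _ _ => Nat.zero_le _) (Finset.mem_univ x)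

lemma sum_antidiagonalTuple_succ_cast_mul (k : ℕ) (o : Fin n) (X : (Fin n → ℕ) → ℝ) :
    ∑ η ∈ antidiagonalTuple n (k + 1), (η o : ℝ) * X η
      = ∑ η ∈ antidiagonalTuple n k, ((η o : ℝ) + 1) * X (η + Pi.single o 1) := by
  have hshift : ∀ η : Fin n → ℕ, (((η + Pi.single o 1 : Fin n → ℕ) o : ℕ) : ℝ) = η o + 1 := by
    simp
  simp_rw [← hshift]
  rw [← Finset.sum_image (g := (· + Pi.single o 1)) (f := fun η => (η o : ℝ) * X η)
    (fun _ _ _ _ h => add_right_cancel h)]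
  refine (Finset.sum_subset (fun η hη => ?_) fun η hη hnot => ?_).symm
  · obtain ⟨ρ, hρ, rfl⟩ := Finset.mem_image.mp hη
    rw [mem_antidiagonalTuple] at hρ ⊢
    rw [sum_add_single_one, hρ]
  · suffices η o = 0 by simp [this]
    by_contra h0
    have hle : Pi.single o 1 ≤ η := fun x => by
      rcases eq_or_ne x o with rfl | hx <;> simp [*, Nat.one_le_iff_ne_zero]
    refine hnot (Finset.mem_image.mpr ⟨η - Pi.single o 1, ?_, tsub_add_cancel_of_le hle⟩)
    rw [mem_antidiagonalTuple] at hη ⊢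
    rw [← tsub_add_cancel_of_le hle, sum_add_single_one] at hη
    omega

lemma gfact_succ (g : ℕ → ℝ) (k : ℕ) : gfact g (k + 1) = gfact g k * g (k + 1) :=
  Finset.prod_Icc_succ_top (Nat.le_add_left 1 k) g

lemma cw_pos (hg : ∀ m, 1 ≤ m → 0 < g m) (η : Fin n → ℕ) : 0 < cw g η :=
  Finset.prod_pos fun _ _ =>
    inv_pos.mpr (Finset.prod_pos fun i hi => hg i (Finset.mem_Icc.mp hi).1)

lemma cw_add_single_one (g : ℕ → ℝ) (o : Fin n) (η : Fin n → ℕ) :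
    cw g (η + Pi.single o 1) = (g (η o + 1))⁻¹ * cw g η := by
  have hrest : ∏ x ∈ {o}ᶜ, (gfact g ((η + Pi.single o 1 : Fin n → ℕ) x))⁻¹
      = ∏ x ∈ {o}ᶜ, (gfact g (η x))⁻¹ :=
    Finset.prod_congr rfl fun x hx => by
      rw [Pi.add_apply, Pi.single_eq_of_ne (Finset.mem_compl.mp hx ∘ Finset.mem_singleton.mpr),
        add_zero]
  rw [cw, cw, Fintype.prod_eq_mul_prod_compl o, Fintype.prod_eq_mul_prod_compl o, hrest,
    Pi.add_apply, Pi.single_eq_same, gfact_succ, mul_inv]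
  ring

/-- The density of the Palm measure `ν_{j+1}`, transported by `η ↦ η - d₀` to configurations
with `j` particles, with respect to the canonical weight `cw`. -/
noncomputable def palmWeight (g : ℕ → ℝ) (o : Fin n) (η : Fin n → ℕ) : ℝ :=
  ((η o : ℝ) + 1) / g (η o + 1) * cw g η

lemma palmE_succ (g : ℕ → ℝ) (k : ℕ) (o : Fin n) (f : (Fin n → ℕ) → ℝ) :
    palmE g n (k + 1) o f
      = wAvg (antidiagonalTuple n k) (palmWeight g o) (fun η => f (η + Pi.single o 1)) := by
  have hsum : ∀ X : (Fin n → ℕ) → ℝ, ∑ η ∈ antidiagonalTuple n (k + 1), (η o : ℝ) * cw g η * X η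
      = ∑ η ∈ antidiagonalTuple n k, palmWeight g o η * X (η + Pi.single o 1) := fun X => by
    simp_rw [mul_assoc]
    rw [sum_antidiagonalTuple_succ_cast_mul]
    refine Finset.sum_congr rfl fun η _ => ?_
    rw [cw_add_single_one, palmWeight]
    ring
  have hnorm := hsum fun _ => 1
  simp only [mul_one] at hnorm
  rw [palmE, wAvg, hsum, hnorm]

lemma mv_add_single_one (o : Fin n) {η : Fin n → ℕ} {x : Fin n} (hx : 1 ≤ η x) (y : Fin n) :
    mv (η + Pi.single o 1) x y = mv η x y + Pi.single o 1 := by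
  funext z
  simp only [mv, Pi.add_apply, Pi.single_apply]
  split_ifs <;> omega

/-- Leaving the origin at the environment rate `g(η(0)+1) η(0)/(η(0)+1)` is the source of the
factor `a₁ (η(0)+1)/g(η(0)+1)`; elsewhere the rates agree and this factor is at least `1`. -/
lemma g_le_mul_rEnv_add_single_one (hg : ∀ m, 0 ≤ g m) (o : Fin n) {η : Fin n → ℕ}
    (hgo : 0 < g (η o + 1)) (hle : ∀ m ≤ η o + 1, g m ≤ a₁ * m) (x : Fin n) :
    g (η x) ≤ a₁ * (((η o : ℝ) + 1) / g (η o + 1)) * rEnv g o (η + Pi.single o 1) x := by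
  rcases eq_or_ne x o with rfl | hx
  · have hrate : a₁ * (((η x : ℝ) + 1) / g (η x + 1)) * rEnv g x (η + Pi.single x 1) x
        = a₁ * η x := by
      rw [rEnv, if_pos rfl, Pi.add_apply, Pi.single_eq_same]
      push_cast
      field_simp
      ring
    exact hrate ▸ hle (η x) (Nat.le_succ _)
  · have hC : 1 ≤ a₁ * (((η o : ℝ) + 1) / g (η o + 1)) := by
      rw [mul_div_assoc', le_div_iff₀ hgo, one_mul]
      exact_mod_cast hle _ le_rfl
    rw [rEnv, if_neg hx, Pi.add_apply, Pi.single_eq_of_ne hx, add_zero]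
    exact le_mul_of_one_le_left (hg _) hC

lemma g_mul_sq_le_mul_rEnv_mul_sq (hg : ∀ m, 0 ≤ g m) (o : Fin n) {η : Fin n → ℕ}
    (hgo : 0 < g (η o + 1)) (hle : ∀ m ≤ η o + 1, g m ≤ a₁ * m) (x y : Fin n)
    (f : (Fin n → ℕ) → ℝ) :
    g (η x) * (f (mv η x y + Pi.single o 1) - f (η + Pi.single o 1)) ^ 2
      ≤ a₁ * (((η o : ℝ) + 1) / g (η o + 1)) * (rEnv g o (η + Pi.single o 1) x
        * (f (mv (η + Pi.single o 1) x y) - f (η + Pi.single o 1)) ^ 2) := by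
  have hrate := g_le_mul_rEnv_add_single_one hg o hgo hle x
  rw [← mul_assoc]
  rcases Nat.eq_zero_or_pos (η x) with h0 | hpos
  · have hg0 : g 0 = 0 := le_antisymm (by simpa using hle 0 (Nat.zero_le _)) (hg 0)
    rw [h0, hg0] at hrate ⊢
    rw [zero_mul]
    exact mul_nonneg hrate (sq_nonneg _)
  · rw [mv_add_single_one o hpos]
    exact mul_le_mul_of_nonneg_right hrate (sq_nonneg _)

lemma dloc_le_mul_dlocEnv {l : ℕ} (hg : ∀ m, 0 ≤ g m) (o : Fin (2 * l + 1))
    {η : Fin (2 * l + 1) → ℕ} (hgo : 0 < g (η o + 1)) (hle : ∀ m ≤ η o + 1, g m ≤ a₁ * m)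
    (f : (Fin (2 * l + 1) → ℕ) → ℝ) :
    dloc g l η (fun ρ => f (ρ + Pi.single o 1))
      ≤ a₁ * (((η o : ℝ) + 1) / g (η o + 1)) * dlocEnv g l o (η + Pi.single o 1) f := by
  set C := a₁ * (((η o : ℝ) + 1) / g (η o + 1))
  rw [dloc, dlocEnv, mul_left_comm C, Finset.mul_sum _ _ C]
  gcongr with i
  have hAB := g_mul_sq_le_mul_rEnv_mul_sq hg o hgo hle (sA l i) (sB l i) f
  have hBA := g_mul_sq_le_mul_rEnv_mul_sq hg o hgo hle (sB l i) (sA l i) f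
  linarith

lemma rEnv_nonneg (hg : ∀ m, 0 ≤ g m) (o : Fin n) (η : Fin n → ℕ) (x : Fin n) :
    0 ≤ rEnv g o η x := by
  unfold rEnv
  split_ifs
  · rcases Nat.eq_zero_or_pos (η x) with h0 | hpos
    · simp [h0]
    · have : (1 : ℝ) ≤ η x := by exact_mod_cast hpos
      exact mul_nonneg (hg _) (div_nonneg (by linarith) (Nat.cast_nonneg _))
  · exact hg _

lemma dlocEnv_nonneg (hg : ∀ m, 0 ≤ g m) {l : ℕ} (o : Fin (2 * l + 1))
    (η : Fin (2 * l + 1) → ℕ) (f : (Fin (2 * l + 1) → ℕ) → ℝ) : 0 ≤ dlocEnv g l o η f := by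
  have hterm : ∀ x y, 0 ≤ 1 / 2 * rEnv g o η x * (f (mv η x y) - f η) ^ 2 := fun x y =>
    mul_nonneg (mul_nonneg (by norm_num) (rEnv_nonneg hg o η x)) (sq_nonneg _)
  exact mul_nonneg (by norm_num) (Finset.sum_nonneg fun i _ => add_nonneg (hterm _ _) (hterm _ _))

lemma g_le_mul_of_inv_le_div (hg0 : g 0 = 0) (hgpos : ∀ m, 1 ≤ m → 0 < g m) (ha₁ : 0 < a₁)
    {j : ℕ} (hbound : ∀ m : ℕ, 1 ≤ m → m ≤ j → a₁⁻¹ ≤ (m : ℝ) / g m) :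
    ∀ m ≤ j, g m ≤ a₁ * m := by
  intro m hm
  rcases Nat.eq_zero_or_pos m with rfl | hpos
  · simp [hg0]
  · have hgm := hgpos m hpos
    have := (inv_le_comm₀ ha₁ (div_pos (by exact_mod_cast hpos) hgm)).mp (hbound m hpos hm)
    rwa [inv_div, div_le_iff₀ (by exact_mod_cast hpos)] at this

lemma sum_cw_pos (hgpos : ∀ m, 1 ≤ m → 0 < g m) (o : Fin n) (k : ℕ) :
    0 < ∑ η ∈ antidiagonalTuple n k, cw g η :=
  Finset.sum_pos (fun η _ => cw_pos hgpos η) (antidiagonalTuple_nonempty o k)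

lemma palmWeight_mem_Icc (hgpos : ∀ m, 1 ≤ m → 0 < g m) {k : ℕ}
    (hbound : ∀ m : ℕ, 1 ≤ m → m ≤ k + 1 →
      a₁⁻¹ ≤ (m : ℝ) / g m ∧ (m : ℝ) / g m ≤ ((k + 1 : ℕ) : ℝ) * a₀⁻¹)
    (o : Fin n) {η : Fin n → ℕ} (hη : η ∈ antidiagonalTuple n k) :
    a₁⁻¹ * cw g η ≤ palmWeight g o η ∧ palmWeight g o η ≤ ((k + 1 : ℕ) : ℝ) * a₀⁻¹ * cw g η := by
  have hb := hbound (η o + 1) (Nat.le_add_left 1 _)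
    (Nat.succ_le_succ (apply_le_of_mem_antidiagonalTuple hη o))
  rw [Nat.cast_add_one] at hb
  exact ⟨mul_le_mul_of_nonneg_right hb.1 (cw_pos hgpos η).le,
    mul_le_mul_of_nonneg_right hb.2 (cw_pos hgpos η).le⟩

lemma palmWeight_pos (hgpos : ∀ m, 1 ≤ m → 0 < g m) (o : Fin n) (η : Fin n → ℕ) :
    0 < palmWeight g o η :=
  mul_pos (div_pos (by positivity) (hgpos _ (Nat.le_add_left 1 _))) (cw_pos hgpos η)

lemma varNu_succ_eq (g : ℕ → ℝ) (l k : ℕ) (o : Fin (2 * l + 1))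
    (f : (Fin (2 * l + 1) → ℕ) → ℝ) :
    varNu g l (k + 1) o f
      = wVar (antidiagonalTuple (2 * l + 1) k) (palmWeight g o)
          (fun η => f (η + Pi.single o 1)) := by
  rw [varNu, palmE_succ, palmE_succ]
  rfl

lemma dirNu_succ_eq (g : ℕ → ℝ) (l k : ℕ) (o : Fin (2 * l + 1))
    (f : (Fin (2 * l + 1) → ℕ) → ℝ) :
    dirNu g l (k + 1) o f = wAvg (antidiagonalTuple (2 * l + 1) k) (palmWeight g o)
      (fun η => dlocEnv g l o (η + Pi.single o 1) f) :=
  palmE_succ g k o (fun η => dlocEnv g l o η f)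

lemma varNu_succ_le (hgpos : ∀ m, 1 ≤ m → 0 < g m) (ha₁ : 0 < a₁) {l k : ℕ}
    (hbound : ∀ m : ℕ, 1 ≤ m → m ≤ k + 1 →
      a₁⁻¹ ≤ (m : ℝ) / g m ∧ (m : ℝ) / g m ≤ ((k + 1 : ℕ) : ℝ) * a₀⁻¹)
    (o : Fin (2 * l + 1)) (f : (Fin (2 * l + 1) → ℕ) → ℝ) :
    varNu g l (k + 1) o f
      ≤ a₁ * a₀⁻¹ * (k + 1 : ℕ) * varMu g l k (fun η => f (η + Pi.single o 1)) := by
  rw [varNu_succ_eq]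
  calc _ ≤ ((k + 1 : ℕ) : ℝ) * a₀⁻¹ / a₁⁻¹
        * wVar (antidiagonalTuple (2 * l + 1) k) (cw g) (fun η => f (η + Pi.single o 1)) :=
      wVar_le_of_le_of_le (inv_pos.mpr ha₁) (fun η _ => (cw_pos hgpos η).le)
        (fun η hη => (palmWeight_mem_Icc hgpos hbound o hη).1)
        (fun η hη => (palmWeight_mem_Icc hgpos hbound o hη).2) (sum_cw_pos hgpos o k) _
    _ = _ := by
      congr 1
      rw [div_inv_eq_mul]
      ring

lemma dirMu_le_dirNu_succ (hg0 : g 0 = 0) (hgpos : ∀ m, 1 ≤ m → 0 < g m) (ha₁ : 0 < a₁)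
    {l k : ℕ}
    (hbound : ∀ m : ℕ, 1 ≤ m → m ≤ k + 1 →
      a₁⁻¹ ≤ (m : ℝ) / g m ∧ (m : ℝ) / g m ≤ ((k + 1 : ℕ) : ℝ) * a₀⁻¹)
    (o : Fin (2 * l + 1)) (f : (Fin (2 * l + 1) → ℕ) → ℝ) :
    dirMu g l k (fun η => f (η + Pi.single o 1))
      ≤ a₁ * a₀⁻¹ * (k + 1 : ℕ) * dirNu g l (k + 1) o f := by
  have hg : ∀ m, 0 ≤ g m := fun m => (Nat.eq_zero_or_pos m).elim (fun h => h ▸ hg0.ge)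
    fun h => (hgpos m h).le
  have hle := g_le_mul_of_inv_le_div hg0 hgpos ha₁ fun m h1 h2 => (hbound m h1 h2).1
  have hlocal : ∀ η ∈ antidiagonalTuple (2 * l + 1) k,
      cw g η * dloc g l η (fun ρ => f (ρ + Pi.single o 1))
        ≤ a₁ * (palmWeight g o η * dlocEnv g l o (η + Pi.single o 1) f) := fun η hη => by
    have hηo := Nat.succ_le_succ (apply_le_of_mem_antidiagonalTuple hη o)
    calc cw g η * dloc g l η (fun ρ => f (ρ + Pi.single o 1))
        ≤ cw g η * (a₁ * (((η o : ℝ) + 1) / g (η o + 1))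
            * dlocEnv g l o (η + Pi.single o 1) f) :=
          mul_le_mul_of_nonneg_left (dloc_le_mul_dlocEnv hg o (hgpos _ (Nat.le_add_left 1 _))
            (fun m hm => hle m (hm.trans hηo)) f) (cw_pos hgpos η).le
      _ = a₁ * (palmWeight g o η * dlocEnv g l o (η + Pi.single o 1) f) := by
          rw [palmWeight]; ring
  have hsum : ∑ η ∈ antidiagonalTuple (2 * l + 1) k, palmWeight g o η
      ≤ ((k + 1 : ℕ) : ℝ) * a₀⁻¹ * ∑ η ∈ antidiagonalTuple (2 * l + 1) k, cw g η := by
    rw [Finset.mul_sum]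
    exact Finset.sum_le_sum fun η hη => (palmWeight_mem_Icc hgpos hbound o hη).2
  have hpos : 0 < ∑ η ∈ antidiagonalTuple (2 * l + 1) k, palmWeight g o η :=
    Finset.sum_pos (fun η _ => palmWeight_pos hgpos o η) (antidiagonalTuple_nonempty o k)
  rw [dirNu_succ_eq]
  calc _ ≤ a₁ * (((k + 1 : ℕ) : ℝ) * a₀⁻¹) * wAvg (antidiagonalTuple (2 * l + 1) k)
        (palmWeight g o) (fun η => dlocEnv g l o (η + Pi.single o 1) f) :=
      wAvg_le_mul_wAvg ha₁.le hlocal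
        (Finset.sum_nonneg fun η _ => mul_nonneg (palmWeight_pos hgpos o η).le
          (dlocEnv_nonneg hg o _ f)) hsum (sum_cw_pos hgpos o k) hpos
    _ = _ := by ring

end ZeroRange

/-- Lemma spec_gap0: if `a₁⁻¹ ≤ m/g(m) ≤ j a₀⁻¹` for
`1 ≤ m ≤ j`, and `W` is a Poincaré constant for the canonical measure with
`j−1` particles, then `(a₁ a₀⁻¹ j)² W` is a Poincaré constant for the Palm
canonical measure with `j` particles and the environment Dirichlet form;
i.e. `W^env(l,j) ≤ (a₁ a₀⁻¹ j)² W(l,j−1)`. -/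
theorem stmt15 (g : ℕ → ℝ) (a₀ a₁ : ℝ) (ha₀ : 0 < a₀) (ha : a₀ ≤ a₁)
    (hg0 : g 0 = 0) (hgpos : ∀ m : ℕ, 1 ≤ m → 0 < g m)
    (l j : ℕ) (hj : 1 ≤ j)
    (hbound : ∀ m : ℕ, 1 ≤ m → m ≤ j →
      a₁⁻¹ ≤ (m : ℝ) / g m ∧ (m : ℝ) / g m ≤ j * a₀⁻¹)
    (W : ℝ) (hW0 : 0 ≤ W)
    (hW : ∀ f : (Fin (2 * l + 1) → ℕ) → ℝ,
      varMu g l (j - 1) f ≤ W * dirMu g l (j - 1) f) :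
    ∀ f : (Fin (2 * l + 1) → ℕ) → ℝ,
      varNu g l j ⟨l, by omega⟩ f
        ≤ (a₁ * a₀⁻¹ * j) ^ 2 * W * dirNu g l j ⟨l, by omega⟩ f := by
  obtain ⟨k, rfl⟩ : ∃ k, j = k + 1 := ⟨j - 1, by omega⟩
  rw [Nat.add_sub_cancel] at hW
  intro f
  have ha₁ : 0 < a₁ := ha₀.trans_le ha
  set o : Fin (2 * l + 1) := ⟨l, by omega⟩
  set c := a₁ * a₀⁻¹ * ((k + 1 : ℕ) : ℝ)
  have hc : 0 ≤ c := by positivity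
  calc varNu g l (k + 1) o f
      ≤ c * varMu g l k (fun η => f (η + Pi.single o 1)) := varNu_succ_le hgpos ha₁ hbound o f
    _ ≤ c * (W * dirMu g l k (fun η => f (η + Pi.single o 1))) := by gcongr; exact hW _
    _ ≤ c * (W * (c * dirNu g l (k + 1) o f)) := by
      gcongr; exact dirMu_le_dirNu_succ hg0 hgpos ha₁ hbound o f
    _ = c ^ 2 * W * dirNu g l (k + 1) o f := by ring
end

section
/- (Spectral gap upper bound for bounded rates, Lemma spec_gap.) Suppose a₀ ≤ g(k) ≤ a₁ for all k ≥ 1 and g(k) → L as k → ∞. Given the known spectral gap bound for the unit-rate zero-range process, Var_{μ¹_{Λ_l,j}}(f) ≤ b₀ (l+j)² D_{μ¹_{Λ_l,j}}(f), for every α > 0 there is a constant B = B_α such that the inverse spectral gap for rate g satisfies W(l,j) ≤ B^l (1+α)^j (l+j)², i.e., Var_{μ_{Λ_l,j}}(f) ≤ B^l (1+α)^j (l+j)² D(μ_{Λ_l,j}, f) for all f. -/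
/-!
The canonical weight `cw g η = ∏ₓ 1/g(η x)!` is compared with the weight `1` of the unit rate
`gOne`. Since `g(k) → L`, we have `(1-β)L ≤ g(k) ≤ (1+β)L` for `k > r₀`, whence
`c ((1-β)L)^k ≤ g(k)! ≤ C ((1+β)L)^k` with `c, C` depending only on `r₀`. On configurations of
`j` particles in `Λ_l` the Radon–Nikodym derivative `dμ_{Λ_l,j}/dμ¹_{Λ_l,j}` therefore oscillates
by a factor at most `R = (C/c)^(2l+1) ((1+β)/(1-β))^j`. Writing variances as double sums over
pairs of configurations, they change by at most `R²`; since `g ≥ a₀ gOne`, Dirichlet forms change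
by at most `R / a₀`. So the unit-rate bound transfers with constant `(b₀/a₀) R³`, and it remains
to choose `β` with `((1+β)/(1-β))³ ≤ 1 + α`. For `l = 0` there are no bonds: the Dirichlet forms
vanish, so the constant need not be absorbed into `B^l`.
-/

open Finset Filter

/-- The unit rate `g¹(k) = 1{k ≥ 1}`. -/
noncomputable def gOne : ℕ → ℝ := fun k => if 1 ≤ k then 1 else 0

section WeightedMean

variable {ι : Type*} (s : Finset ι)

noncomputable def weightedMean (w f : ι → ℝ) : ℝ := (∑ i ∈ s, w i * f i) / ∑ i ∈ s, w i

noncomputable def weightedVar (w f : ι → ℝ) : ℝ :=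
  weightedMean s w (fun i => f i ^ 2) - weightedMean s w f ^ 2

variable {s}

theorem weightedMean_const_mul (w f : ι → ℝ) (c : ℝ) :
    weightedMean s w (fun i => c * f i) = c * weightedMean s w f := by
  simp only [weightedMean, mul_left_comm _ c, ← mul_sum, mul_div_assoc]

theorem weightedMean_mono {w f₁ f₂ : ι → ℝ} (hw : ∀ i ∈ s, 0 ≤ w i)
    (hf : ∀ i ∈ s, f₁ i ≤ f₂ i) : weightedMean s w f₁ ≤ weightedMean s w f₂ :=
  div_le_div_of_nonneg_right (sum_le_sum fun i hi => mul_le_mul_of_nonneg_left (hf i hi) (hw i hi))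
    (sum_nonneg hw)

theorem sum_sum_mul_mul_sub_sq (w f : ι → ℝ) :
    ∑ i ∈ s, ∑ k ∈ s, w i * w k * (f i - f k) ^ 2 =
      2 * (∑ i ∈ s, w i) * (∑ i ∈ s, w i * f i ^ 2) - 2 * (∑ i ∈ s, w i * f i) ^ 2 := by
  have h (i k : ι) : w i * w k * (f i - f k) ^ 2 =
      w i * f i ^ 2 * w k + w i * (w k * f k ^ 2) - 2 * (w i * f i * (w k * f k)) := by ring
  simp only [h, sum_add_distrib, sum_sub_distrib, ← mul_sum, ← sum_mul]
  ring

theorem weightedVar_eq_sum_sum {w : ι → ℝ} (hw : ∑ i ∈ s, w i ≠ 0) (f : ι → ℝ) :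
    weightedVar s w f =
      (∑ i ∈ s, ∑ k ∈ s, w i * w k * (f i - f k) ^ 2) / (2 * (∑ i ∈ s, w i) ^ 2) := by
  rw [sum_sum_mul_mul_sub_sq, weightedVar, weightedMean, weightedMean]
  field_simp

variable {w v : ι → ℝ} {A₁ A₂ : ℝ}

theorem weightedMean_le_mul_weightedMean (hA₁ : 0 < A₁)
    (hv₀ : ∀ i ∈ s, 0 ≤ v i) (hv : 0 < ∑ i ∈ s, v i)
    (hlo : ∀ i ∈ s, A₁ * v i ≤ w i) (hhi : ∀ i ∈ s, w i ≤ A₂ * v i)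
    {h : ι → ℝ} (hh : ∀ i ∈ s, 0 ≤ h i) :
    weightedMean s v h ≤ A₂ / A₁ * weightedMean s w h := by
  have hw : A₁ * ∑ i ∈ s, v i ≤ ∑ i ∈ s, w i := mul_sum s v A₁ ▸ sum_le_sum hlo
  have hw' : ∑ i ∈ s, w i ≤ A₂ * ∑ i ∈ s, v i := mul_sum s v A₂ ▸ sum_le_sum hhi
  have hwpos : 0 < ∑ i ∈ s, w i := (mul_pos hA₁ hv).trans_le hw
  have hA₂ : 0 < A₂ := pos_of_mul_pos_left (hwpos.trans_le hw') hv.le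
  have hvh : ∑ i ∈ s, v i * h i ≤ (∑ i ∈ s, w i * h i) / A₁ := by
    rw [le_div_iff₀ hA₁, sum_mul]
    exact sum_le_sum fun i hi => by
      rw [mul_right_comm, mul_comm _ A₁]; exact mul_le_mul_of_nonneg_right (hlo i hi) (hh i hi)
  calc weightedMean s v h ≤ ((∑ i ∈ s, w i * h i) / A₁) / ((∑ i ∈ s, w i) / A₂) :=
        div_le_div₀ ((sum_nonneg fun i hi => mul_nonneg (hv₀ i hi) (hh i hi)).trans hvh) hvh
          (by positivity) ((div_le_iff₀ hA₂).2 (by linarith))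
    _ = A₂ / A₁ * weightedMean s w h := by
        rw [weightedMean]; field_simp

theorem weightedVar_le_mul_weightedVar (hA₁ : 0 < A₁)
    (hv₀ : ∀ i ∈ s, 0 ≤ v i) (hv : 0 < ∑ i ∈ s, v i)
    (hlo : ∀ i ∈ s, A₁ * v i ≤ w i) (hhi : ∀ i ∈ s, w i ≤ A₂ * v i) (f : ι → ℝ) :
    weightedVar s w f ≤ (A₂ / A₁) ^ 2 * weightedVar s v f := by
  have hw : A₁ * ∑ i ∈ s, v i ≤ ∑ i ∈ s, w i := mul_sum s v A₁ ▸ sum_le_sum hlo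
  have hwpos : 0 < ∑ i ∈ s, w i := (mul_pos hA₁ hv).trans_le hw
  have hpairs : ∑ i ∈ s, ∑ k ∈ s, w i * w k * (f i - f k) ^ 2 ≤
      A₂ ^ 2 * ∑ i ∈ s, ∑ k ∈ s, v i * v k * (f i - f k) ^ 2 := by
    simp only [mul_sum]
    refine sum_le_sum fun i hi => sum_le_sum fun k hk => ?_
    have hwi := (mul_nonneg hA₁.le (hv₀ i hi)).trans (hlo i hi)
    have hwk := (mul_nonneg hA₁.le (hv₀ k hk)).trans (hlo k hk)
    calc w i * w k * (f i - f k) ^ 2 ≤ (A₂ * v i) * (A₂ * v k) * (f i - f k) ^ 2 :=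
          mul_le_mul_of_nonneg_right
            (mul_le_mul (hhi i hi) (hhi k hk) hwk (hwi.trans (hhi i hi))) (sq_nonneg _)
      _ = _ := by ring
  rw [weightedVar_eq_sum_sum hwpos.ne', weightedVar_eq_sum_sum hv.ne']
  calc _ ≤ (A₂ ^ 2 * ∑ i ∈ s, ∑ k ∈ s, v i * v k * (f i - f k) ^ 2) /
        (2 * (A₁ * ∑ i ∈ s, v i) ^ 2) := by
        gcongr
        exact mul_nonneg (sq_nonneg _) (sum_nonneg fun i hi => sum_nonneg fun k hk =>
          mul_nonneg (mul_nonneg (hv₀ i hi) (hv₀ k hk)) (sq_nonneg _))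
    _ = _ := by field_simp

end WeightedMean

open scoped Topology

theorem div_pow_mul_pow_le_gfact {g : ℕ → ℝ} {m D : ℝ} {r₀ : ℕ} (hm : 0 < m) (hmD : m ≤ D)
    (hlow : ∀ k, 1 ≤ k → m ≤ g k) (hhigh : ∀ k, r₀ < k → D ≤ g k) (k : ℕ) :
    (m / D) ^ r₀ * D ^ k ≤ gfact g k := by
  have hD : 0 < D := hm.trans_le hmD
  set t := {i ∈ Icc 1 k | i ≤ r₀}
  have ht : #t ≤ r₀ := by
    calc #t ≤ #(Icc 1 r₀) := card_le_card fun i hi => by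
          simp only [t, mem_filter, mem_Icc] at hi ⊢; omega
      _ = r₀ := by simp
  have hk : D ^ k = D ^ #t * D ^ #{i ∈ Icc 1 k | ¬i ≤ r₀} := by
    rw [← pow_add, card_filter_add_card_filter_not]; simp
  calc (m / D) ^ r₀ * D ^ k ≤ (m / D) ^ #t * D ^ k := by
        gcongr ?_ * _
        exact pow_le_pow_of_le_one (by positivity) ((div_le_one hD).2 hmD) ht
    _ = ∏ i ∈ Icc 1 k, if i ≤ r₀ then m else D := by
        rw [prod_ite, prod_const, prod_const, hk, div_pow]; field_simp; rfl
    _ ≤ gfact g k := prod_le_prod (fun i _ => by split_ifs <;> positivity) fun i hi => by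
        have := (mem_Icc.1 hi).1
        split_ifs with h
        exacts [hlow i this, hhigh i (by omega)]

theorem gfact_le_div_pow_mul_pow {g : ℕ → ℝ} {M U : ℝ} {r₀ : ℕ} (hU : 0 < U) (hUM : U ≤ M)
    (hpos : ∀ k, 1 ≤ k → 0 < g k) (hup : ∀ k, 1 ≤ k → g k ≤ M)
    (hhigh : ∀ k, r₀ < k → g k ≤ U) (k : ℕ) :
    gfact g k ≤ (M / U) ^ r₀ * U ^ k := by
  have hM : 0 < M := hU.trans_le hUM
  have h := div_pow_mul_pow_le_gfact (g := fun i => (g i)⁻¹) (inv_pos.2 hM)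
    (inv_anti₀ hU hUM) (fun k hk => inv_anti₀ (hpos k hk) (hup k hk))
    (fun k hk => inv_anti₀ (hpos k (by omega)) (hhigh k hk)) k
  have hgf : 0 < gfact g k := prod_pos fun i hi => hpos i (mem_Icc.1 hi).1
  rw [gfact, prod_inv_distrib, ← gfact, le_inv_comm₀ (by positivity) hgf] at h
  refine h.trans_eq ?_
  rw [inv_div_inv, mul_inv, ← inv_pow, ← inv_pow, inv_inv, inv_div]

theorem exists_gfact_bounds {g : ℕ → ℝ} {a₀ a₁ L β : ℝ} (ha₀ : 0 < a₀)
    (hbd : ∀ k, 1 ≤ k → a₀ ≤ g k ∧ g k ≤ a₁) (hlim : Tendsto g atTop (𝓝 L))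
    (hβ : 0 < β) (hβ1 : β < 1) :
    ∃ a c C : ℝ, 0 < a ∧ 0 < c ∧ 0 < C ∧
      ∀ k, c * a ^ k ≤ gfact g k ∧ gfact g k ≤ C * ((1 + β) / (1 - β) * a) ^ k := by
  have hL : 0 < L := ha₀.trans_le <|
    ge_of_tendsto hlim (eventually_atTop.2 ⟨1, fun k hk => (hbd k hk).1⟩)
  have hnear : Set.Ioo ((1 - β) * L) ((1 + β) * L) ∈ 𝓝 L :=
    Ioo_mem_nhds (by nlinarith) (by nlinarith)
  obtain ⟨r₀, hr₀⟩ := eventually_atTop.1 (hlim.eventually hnear)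
  set D := (1 - β) * L
  set U := (1 + β) * L
  have hD : 0 < D := mul_pos (by linarith) hL
  have hU : 0 < U := mul_pos (by linarith) hL
  refine ⟨D, (min a₀ D / D) ^ r₀, (max a₁ U / U) ^ r₀, hD, by positivity, by positivity,
    fun k => ⟨?_, ?_⟩⟩
  · exact div_pow_mul_pow_le_gfact (lt_min ha₀ hD) (min_le_right _ _)
      (fun k hk => (min_le_left _ _).trans (hbd k hk).1) (fun k hk => (hr₀ k hk.le).1.le) k
  · rw [show (1 + β) / (1 - β) * D = U by
      simp only [D, U]; field_simp [show 1 - β ≠ 0 by linarith]]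
    exact gfact_le_div_pow_mul_pow hU (le_max_right _ _)
      (fun k hk => ha₀.trans_le (hbd k hk).1) (fun k hk => (hbd k hk).2.trans (le_max_left _ _))
      (fun k hk => (hr₀ k hk.le).2.le) k

theorem antidiagonalTuple_succ_nonempty (n j : ℕ) :
    (Finset.Nat.antidiagonalTuple (n + 1) j).Nonempty :=
  ⟨Pi.single 0 j, by simp [Finset.Nat.mem_antidiagonalTuple]⟩

theorem cw_gOne {n : ℕ} (η : Fin n → ℕ) : cw gOne η = 1 :=
  prod_eq_one fun x _ => by
    rw [gfact, prod_eq_one fun i hi => by simp [gOne, (mem_Icc.1 hi).1], inv_one]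

theorem gOne_nonneg (k : ℕ) : 0 ≤ gOne k := by
  unfold gOne; split_ifs <;> norm_num

theorem cw_nonneg {g : ℕ → ℝ} (hg : ∀ k, 0 ≤ g k) {n : ℕ} (η : Fin n → ℕ) : 0 ≤ cw g η :=
  prod_nonneg fun _ _ => inv_nonneg.2 (prod_nonneg fun i _ => hg i)

theorem prod_mul_pow_eq {n : ℕ} (c a : ℝ) (η : Fin n → ℕ) :
    ∏ x, c * a ^ η x = c ^ n * a ^ ∑ x, η x := by
  rw [prod_mul_distrib, prod_const, card_univ, Fintype.card_fin, prod_pow_eq_pow_sum]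

theorem cw_bounds_of_gfact_bounds {g : ℕ → ℝ} {a b c C : ℝ} (ha : 0 < a) (hc : 0 < c)
    (hg : ∀ k, c * a ^ k ≤ gfact g k ∧ gfact g k ≤ C * b ^ k) {n : ℕ} (η : Fin n → ℕ) :
    (C ^ n * b ^ ∑ x, η x)⁻¹ ≤ cw g η ∧ cw g η ≤ (c ^ n * a ^ ∑ x, η x)⁻¹ := by
  have hpos : 0 < ∏ x, c * a ^ η x := prod_pos fun _ _ => by positivity
  have hlo : ∏ x, c * a ^ η x ≤ ∏ x, gfact g (η x) :=
    prod_le_prod (fun _ _ => by positivity) fun x _ => (hg (η x)).1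
  have hhi : ∏ x, gfact g (η x) ≤ ∏ x, C * b ^ η x :=
    prod_le_prod (fun x _ => (by positivity : (0:ℝ) ≤ c * a ^ η x).trans (hg (η x)).1)
      fun x _ => (hg (η x)).2
  rw [cw, prod_inv_distrib, ← prod_mul_pow_eq, ← prod_mul_pow_eq]
  exact ⟨inv_anti₀ (hpos.trans_le hlo) hhi, inv_anti₀ hpos hlo⟩

theorem dloc_nonneg {g : ℕ → ℝ} (hg : ∀ k, 0 ≤ g k) {l : ℕ} (η : Fin (2 * l + 1) → ℕ)
    (f : (Fin (2 * l + 1) → ℕ) → ℝ) : 0 ≤ dloc g l η f :=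
  mul_nonneg (by norm_num) <| sum_nonneg fun i _ => by
    have := hg (η (sA l i)); have := hg (η (sB l i)); positivity

theorem mul_dloc_le_dloc {g₁ g₂ : ℕ → ℝ} {c : ℝ} (h : ∀ k, c * g₁ k ≤ g₂ k) {l : ℕ}
    (η : Fin (2 * l + 1) → ℕ) (f : (Fin (2 * l + 1) → ℕ) → ℝ) :
    c * dloc g₁ l η f ≤ dloc g₂ l η f := by
  simp only [dloc, mul_sum]
  refine sum_le_sum fun i _ => ?_
  nlinarith [mul_nonneg (sub_nonneg.2 (h (η (sA l i))))
      (sq_nonneg (f (mv η (sA l i) (sB l i)) - f η)),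
    mul_nonneg (sub_nonneg.2 (h (η (sB l i)))) (sq_nonneg (f (mv η (sB l i) (sA l i)) - f η))]

theorem dirMu_nonneg {g : ℕ → ℝ} (hg : ∀ k, 0 ≤ g k) (l j : ℕ)
    (f : (Fin (2 * l + 1) → ℕ) → ℝ) : 0 ≤ dirMu g l j f :=
  div_nonneg (sum_nonneg fun η _ => mul_nonneg (cw_nonneg hg η) (dloc_nonneg hg η f))
    (sum_nonneg fun η _ => cw_nonneg hg η)

theorem dirMu_zero (g : ℕ → ℝ) (j : ℕ) (f : (Fin (2 * 0 + 1) → ℕ) → ℝ) : dirMu g 0 j f = 0 := by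
  simp [dirMu, dloc]

section CanonicalMeasure

variable {g : ℕ → ℝ} {l j : ℕ}

theorem varMu_eq_weightedVar (f : (Fin (2 * l + 1) → ℕ) → ℝ) :
    varMu g l j f = weightedVar (Finset.Nat.antidiagonalTuple (2 * l + 1) j) (cw g) f := rfl

theorem dirMu_eq_weightedMean (f : (Fin (2 * l + 1) → ℕ) → ℝ) :
    dirMu g l j f = weightedMean (Finset.Nat.antidiagonalTuple (2 * l + 1) j) (cw g)
      (fun η => dloc g l η f) := rfl

theorem sum_cw_gOne_pos : 0 < ∑ η ∈ Finset.Nat.antidiagonalTuple (2 * l + 1) j, cw gOne η := by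
  simpa [cw_gOne] using antidiagonalTuple_succ_nonempty (2 * l) j

theorem varMu_le_mul_varMu_gOne {A₁ A₂ : ℝ} (hA₁ : 0 < A₁)
    (hcw : ∀ η ∈ Finset.Nat.antidiagonalTuple (2 * l + 1) j, A₁ ≤ cw g η ∧ cw g η ≤ A₂)
    (f : (Fin (2 * l + 1) → ℕ) → ℝ) :
    varMu g l j f ≤ (A₂ / A₁) ^ 2 * varMu gOne l j f := by
  simp only [varMu_eq_weightedVar]
  exact weightedVar_le_mul_weightedVar hA₁ (fun η _ => (cw_gOne η).symm ▸ zero_le_one)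
    sum_cw_gOne_pos (fun η hη => by simpa [cw_gOne] using (hcw η hη).1)
    (fun η hη => by simpa [cw_gOne] using (hcw η hη).2) f

theorem mul_dirMu_gOne_le_mul_dirMu {a₀ A₁ A₂ : ℝ} (ha₀ : 0 ≤ a₀) (hA₁ : 0 < A₁)
    (hcw : ∀ η ∈ Finset.Nat.antidiagonalTuple (2 * l + 1) j, A₁ ≤ cw g η ∧ cw g η ≤ A₂)
    (hg : ∀ k, a₀ * gOne k ≤ g k) (f : (Fin (2 * l + 1) → ℕ) → ℝ) :
    a₀ * dirMu gOne l j f ≤ A₂ / A₁ * dirMu g l j f := by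
  set s := Finset.Nat.antidiagonalTuple (2 * l + 1) j
  have hA₂ : 0 < A₂ := by
    obtain ⟨η, hη⟩ := antidiagonalTuple_succ_nonempty (2 * l) j
    exact hA₁.trans_le ((hcw η hη).1.trans (hcw η hη).2)
  calc a₀ * dirMu gOne l j f = weightedMean s (cw gOne) (fun η => a₀ * dloc gOne l η f) :=
        (weightedMean_const_mul _ _ _).symm
    _ ≤ A₂ / A₁ * weightedMean s (cw g) (fun η => a₀ * dloc gOne l η f) :=
        weightedMean_le_mul_weightedMean hA₁ (fun η _ => (cw_gOne η).symm ▸ zero_le_one)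
          sum_cw_gOne_pos (fun η hη => by simpa [cw_gOne] using (hcw η hη).1)
          (fun η hη => by simpa [cw_gOne] using (hcw η hη).2)
          fun η _ => mul_nonneg ha₀ (dloc_nonneg gOne_nonneg η f)
    _ ≤ A₂ / A₁ * dirMu g l j f :=
        mul_le_mul_of_nonneg_left (weightedMean_mono (fun η hη => hA₁.le.trans (hcw η hη).1)
          fun η _ => mul_dloc_le_dloc hg η f) (by positivity)

theorem varMu_le_of_gfact_bounds {a₀ b₀ a c C ρ : ℝ} (ha₀ : 0 < a₀) (hb₀ : 0 ≤ b₀)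
    (ha : 0 < a) (hc : 0 < c) (hC : 0 < C) (hρ : 0 < ρ) (hg : ∀ k, a₀ * gOne k ≤ g k)
    (hgfact : ∀ k, c * a ^ k ≤ gfact g k ∧ gfact g k ≤ C * (ρ * a) ^ k)
    (hunit : ∀ f, varMu gOne l j f ≤ b₀ * ((l : ℝ) + j) ^ 2 * dirMu gOne l j f)
    (f : (Fin (2 * l + 1) → ℕ) → ℝ) :
    varMu g l j f ≤
      b₀ / a₀ * ((C / c) ^ (2 * l + 1) * ρ ^ j) ^ 3 * ((l : ℝ) + j) ^ 2 * dirMu g l j f := by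
  have hcw : ∀ η ∈ Finset.Nat.antidiagonalTuple (2 * l + 1) j,
      (C ^ (2 * l + 1) * (ρ * a) ^ j)⁻¹ ≤ cw g η ∧ cw g η ≤ (c ^ (2 * l + 1) * a ^ j)⁻¹ :=
    fun η hη => Finset.Nat.mem_antidiagonalTuple.1 hη ▸ cw_bounds_of_gfact_bounds ha hc hgfact η
  have hratio : (c ^ (2 * l + 1) * a ^ j)⁻¹ / (C ^ (2 * l + 1) * (ρ * a) ^ j)⁻¹ =
      (C / c) ^ (2 * l + 1) * ρ ^ j := by
    rw [inv_div_inv, div_pow, mul_pow]; field_simp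
  have hvar := varMu_le_mul_varMu_gOne (by positivity) hcw f
  have hdir := mul_dirMu_gOne_le_mul_dirMu ha₀.le (by positivity) hcw hg f
  rw [hratio] at hvar hdir
  set R := (C / c) ^ (2 * l + 1) * ρ ^ j
  calc varMu g l j f ≤ R ^ 2 * (b₀ * ((l : ℝ) + j) ^ 2 * dirMu gOne l j f) :=
        hvar.trans (mul_le_mul_of_nonneg_left (hunit f) (by positivity))
    _ = R ^ 2 * (b₀ / a₀ * ((l : ℝ) + j) ^ 2) * (a₀ * dirMu gOne l j f) := by
        field_simp
    _ ≤ R ^ 2 * (b₀ / a₀ * ((l : ℝ) + j) ^ 2) * (R * dirMu g l j f) :=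
        mul_le_mul_of_nonneg_left hdir (by positivity)
    _ = _ := by ring

end CanonicalMeasure

theorem exists_one_add_div_one_sub_pow_three_le {α : ℝ} (hα : 0 < α) :
    ∃ β : ℝ, 0 < β ∧ β < 1 ∧ ((1 + β) / (1 - β)) ^ 3 ≤ 1 + α := by
  have hcont : ContinuousAt (fun β : ℝ => ((1 + β) / (1 - β)) ^ 3) 0 := by
    fun_prop (disch := norm_num)
  have hsmall : ∀ᶠ β in 𝓝 (0 : ℝ), β < 1 ∧ ((1 + β) / (1 - β)) ^ 3 < 1 + α :=
    (eventually_lt_nhds one_pos).and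
      (hcont.eventually_lt continuousAt_const (by norm_num; linarith))
  obtain ⟨β, ⟨hβ1, hβα⟩, hβ⟩ :=
    ((hsmall.filter_mono nhdsWithin_le_nhds).and self_mem_nhdsWithin).exists (f := 𝓝[>] (0 : ℝ))
  exact ⟨β, hβ, hβ1, hβα.le⟩

theorem exists_forall_mul_pow_le_pow {K : ℝ} (d : ℝ) (hK : 0 ≤ K) :
    ∃ B : ℝ, 0 < B ∧ ∀ l : ℕ, 1 ≤ l → d * K ^ (3 * (2 * l + 1)) ≤ B ^ l := by
  refine ⟨max 1 d * max 1 K ^ 9, by positivity, fun l hl => ?_⟩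
  rw [mul_pow, ← pow_mul]
  gcongr
  · exact (le_max_right 1 d).trans (le_self_pow₀ (le_max_left 1 d) (by omega))
  · calc K ^ (3 * (2 * l + 1)) ≤ max 1 K ^ (3 * (2 * l + 1)) := by gcongr; exact le_max_right 1 K
      _ ≤ max 1 K ^ (9 * l) := pow_le_pow_right₀ (le_max_left 1 K) (by omega)

theorem stmt16_general (g : ℕ → ℝ) (a₀ a₁ L b₀ : ℝ)
    (ha₀ : 0 < a₀) (hg0 : g 0 = 0)
    (hbd : ∀ k : ℕ, 1 ≤ k → a₀ ≤ g k ∧ g k ≤ a₁)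
    (hlim : Tendsto g atTop (nhds L)) (hb₀ : 0 ≤ b₀)
    (hunit : ∀ (l j : ℕ) (f : (Fin (2 * l + 1) → ℕ) → ℝ),
      varMu gOne l j f ≤ b₀ * ((l : ℝ) + j) ^ 2 * dirMu gOne l j f) :
    ∀ α : ℝ, 0 < α → ∃ B : ℝ, 0 < B ∧
      ∀ (l j : ℕ) (f : (Fin (2 * l + 1) → ℕ) → ℝ),
        varMu g l j f ≤ B ^ l * (1 + α) ^ j * ((l : ℝ) + j) ^ 2 * dirMu g l j f := by
  intro α hα
  have hg : ∀ k, a₀ * gOne k ≤ g k := fun k => by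
    rcases Nat.eq_zero_or_pos k with rfl | hk
    · simp [gOne, hg0]
    · simpa [gOne, Nat.one_le_iff_ne_zero.2 hk.ne'] using (hbd k hk).1
  have hg_nonneg : ∀ k, 0 ≤ g k := fun k =>
    (mul_nonneg ha₀.le (gOne_nonneg k)).trans (hg k)
  obtain ⟨β, hβ, hβ1, hρα⟩ := exists_one_add_div_one_sub_pow_three_le hα
  obtain ⟨a, c, C, ha, hc, hC, hgfact⟩ := exists_gfact_bounds ha₀ hbd hlim hβ hβ1
  obtain ⟨B, hB, hBl⟩ := exists_forall_mul_pow_le_pow (b₀ / a₀) (div_pos hC hc).le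
  have hρ : 0 < (1 + β) / (1 - β) := div_pos (by linarith) (by linarith)
  refine ⟨B, hB, fun l j f => ?_⟩
  have key := varMu_le_of_gfact_bounds ha₀ hb₀ ha hc hC hρ hg hgfact (hunit l j) f
  rcases Nat.eq_zero_or_pos l with rfl | hl
  · simpa [dirMu_zero] using key
  refine key.trans (mul_le_mul_of_nonneg_right (mul_le_mul_of_nonneg_right ?_ (sq_nonneg _))
    (dirMu_nonneg hg_nonneg l j f))
  calc b₀ / a₀ * ((C / c) ^ (2 * l + 1) * ((1 + β) / (1 - β)) ^ j) ^ 3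
      = b₀ / a₀ * (C / c) ^ (3 * (2 * l + 1)) * (((1 + β) / (1 - β)) ^ 3) ^ j := by
        rw [mul_pow, ← pow_mul, ← pow_mul, ← pow_mul, mul_comm _ 3, mul_comm j 3, mul_assoc]
    _ ≤ B ^ l * (1 + α) ^ j := by
      gcongr
      exact hBl l hl

/-- Lemma spec_gap: for a bounded rate `a₀ ≤ g ≤ a₁` with
`g(k) → L`, given the unit-rate spectral gap bound
`Var_{μ¹_{Λ_l,j}}(f) ≤ b₀ (l+j)² D_{μ¹_{Λ_l,j}}(f)`, for every `α > 0` there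
is `B = B_α` with `W(l,j) ≤ B^l (1+α)^j (l+j)²`, i.e. the Poincaré inequality
`Var_{μ_{Λ_l,j}}(f) ≤ B^l (1+α)^j (l+j)² D(μ_{Λ_l,j}, f)` holds for all `f`. -/
theorem stmt16 (g : ℕ → ℝ) (a₀ a₁ L b₀ : ℝ)
    (ha₀ : 0 < a₀) (ha : a₀ ≤ a₁) (hg0 : g 0 = 0)
    (hbd : ∀ k : ℕ, 1 ≤ k → a₀ ≤ g k ∧ g k ≤ a₁)
    (hlim : Tendsto g atTop (nhds L)) (hb₀ : 0 ≤ b₀)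
    (hunit : ∀ (l j : ℕ) (f : (Fin (2 * l + 1) → ℕ) → ℝ),
      varMu gOne l j f ≤ b₀ * ((l : ℝ) + j) ^ 2 * dirMu gOne l j f) :
    ∀ α : ℝ, 0 < α → ∃ B : ℝ, 0 < B ∧
      ∀ (l j : ℕ) (f : (Fin (2 * l + 1) → ℕ) → ℝ),
        varMu g l j f ≤ B ^ l * (1 + α) ^ j * ((l : ℝ) + j) ^ 2 * dirMu g l j f :=
  stmt16_general g a₀ a₁ L b₀ ha₀ hg0 hbd hlim hb₀ hunit
end
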